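/- arXiv:1105.6190 — 3 statements merged into one kernel-verified Lean document; each statement's English description precedes it below -/
import Mathlib

section
/- Let L be an integral ℓ-monoid, X a finite alphabet, and φ : X* → (L, ⊗, 1) a monoid homomorphism. Then for every subset U ⊆ X* and every map γ : X* → {0,1} ⊆ L, the set {φ(u)⊗γ(u) : u ∈ U} has a least upper bound in L, and ⋁_{u∈U} φ(u)⊗γ(u) = ⋁_{u∈M(U′)} φ(u)⊗γ(u), where U′ = {u ∈ U : γ(u) = 1} and M(U′) denotes the (finite) set of minimal elements of U′ with respect to the embedding order ≤_em. -/
/-- A lattice-ordered monoid (ℓ-monoid). -/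
class LMonoid (L : Type*) extends Lattice L, BoundedOrder L, Monoid L where
  mul_bot : ∀ x : L, x * ⊥ = ⊥
  bot_mul : ∀ x : L, ⊥ * x = ⊥
  mul_sup : ∀ x y z : L, x * (y ⊔ z) = x * y ⊔ x * z
  sup_mul : ∀ x y z : L, (x ⊔ y) * z = x * z ⊔ y * z

/-- An integral ℓ-monoid: the unit of the multiplication is the top element of the lattice. -/
class IntegralLMonoid (L : Type*) extends LMonoid L where
  one_eq_top : (1 : L) = ⊤

/-- The set `M(U)` of minimal words of `U ⊆ X*` with respect to the embedding
(sublist) order. -/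
def minimalWords {X : Type*} (U : Set (List X)) : Set (List X) :=
  {u ∈ U | ∀ v ∈ U, List.Sublist v u → v = u}

/-!
Every word of `U' = {u ∈ U | γ u = 1}` contains a minimal word of `U'` as a sublist, and in an
integral ℓ-monoid `φ` is antitone for the sublist order, so each nonzero term `φ(u) ⊗ γ(u)` is
dominated by the term of a minimal word; the remaining terms are `0`. Hence both families have
the same upper bounds. By Higman's lemma the minimal words form a finite antichain, so the
join over them exists.
-/

theorem wellQuasiOrdered_sublist (X : Type*) [Finite X] :
    WellQuasiOrdered (List.Sublist : List X → List X → Prop) := by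
  have higman := (Set.finite_univ (α := X)).partiallyWellOrderedOn
    (r := (· = ·)) |>.partiallyWellOrderedOn_sublistForall₂
  simp only [Set.mem_univ, imp_true_iff, Set.ofPred_true,
    Set.partiallyWellOrderedOn_univ_iff] at higman
  intro f
  obtain ⟨m, n, hmn, h⟩ := higman f
  obtain ⟨l, hfl, hl⟩ := List.sublistForall₂_iff.1 h
  rw [List.forall₂_eq_eq_eq] at hfl
  exact ⟨m, n, hmn, hfl ▸ hl⟩

theorem exists_mem_minimalWords_sublist {X : Type*} {U : Set (List X)} {u : List X}
    (hu : u ∈ U) : ∃ v ∈ minimalWords U, v.Sublist u := by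
  obtain ⟨v, ⟨hvU, hvu⟩, hmin⟩ := (measure List.length).wf.has_min {v | v ∈ U ∧ v.Sublist u}
    ⟨u, hu, .refl u⟩
  refine ⟨v, ⟨hvU, fun w hwU hwv => hwv.eq_of_length_le ?_⟩, hvu⟩
  exact not_lt.1 (hmin w ⟨hwU, hwv.trans hvu⟩)

theorem minimalWords_finite {X : Type*} [Finite X] (U : Set (List X)) :
    (minimalWords U).Finite :=
  IsAntichain.finite_of_wellQuasiOrdered (fun _ ha _ hb hne hab => hne (hb.2 _ ha.1 hab))
    (wellQuasiOrdered_sublist X)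

namespace LMonoid

variable {L : Type*} [LMonoid L]

instance toMulLeftMono : MulLeftMono L :=
  ⟨fun a b c h => sup_eq_right.1 (by rw [← mul_sup, sup_eq_right.2 h])⟩

instance toMulRightMono : MulRightMono L :=
  ⟨fun a b c h => sup_eq_right.1 (by rw [← sup_mul, sup_eq_right.2 h])⟩

end LMonoid

namespace IntegralLMonoid

variable {L : Type*} [IntegralLMonoid L]

theorem le_one (x : L) : x ≤ 1 :=
  one_eq_top (L := L) ▸ le_top

theorem map_ofList_le_of_sublist {X : Type*} (φ : FreeMonoid X →* L) {u v : List X}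
    (h : v.Sublist u) : φ (FreeMonoid.ofList u) ≤ φ (FreeMonoid.ofList v) := by
  induction h with
  | slnil => exact le_rfl
  | cons _ _ ih =>
    rw [FreeMonoid.ofList_cons, map_mul]
    exact (mul_le_of_le_one_left' (le_one _)).trans ih
  | cons_cons _ _ ih =>
    simp only [FreeMonoid.ofList_cons, map_mul]
    exact mul_le_mul_right ih _

theorem upperBounds_image_minimalWords {X : Type*} (φ : FreeMonoid X →* L) (U : Set (List X))
    {γ : List X → L} (hγ : ∀ u, γ u = 1 ∨ γ u = ⊥) :
    upperBounds ((fun u => φ (FreeMonoid.ofList u) * γ u) '' minimalWords {u ∈ U | γ u = 1}) =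
      upperBounds ((fun u => φ (FreeMonoid.ofList u) * γ u) '' U) := by
  refine (upperBounds_mono_set (Set.image_mono fun u hu => hu.1.1)).antisymm' ?_
  rintro c hc _ ⟨u, hu, rfl⟩
  rcases hγ u with hγu | hγu
  · obtain ⟨v, hv, hvu⟩ := exists_mem_minimalWords_sublist (U := {u ∈ U | γ u = 1}) ⟨hu, hγu⟩
    refine le_trans ?_ (hc ⟨v, hv, rfl⟩)
    simp only [hγu, hv.1.2, mul_one]
    exact map_ofList_le_of_sublist φ hvu
  · simp only [hγu, LMonoid.mul_bot, bot_le]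

end IntegralLMonoid

theorem Set.Finite.exists_isLUB_image {α β : Type*} [SemilatticeSup β] [OrderBot β]
    {s : Set α} (hs : s.Finite) (f : α → β) : ∃ b, IsLUB (f '' s) b :=
  ⟨hs.toFinset.sup f, by simpa using hs.toFinset.isLUB_sup (f := f)⟩

/-- Let `L` be an integral ℓ-monoid, `X` a finite alphabet and
`φ : X* → (L, ⊗, 1)` a monoid homomorphism.  For every `U ⊆ X*` and every map
`γ : X* → {0, 1} ⊆ L`, the set `{φ(u) ⊗ γ(u) : u ∈ U}` has a least upper bound in `L`
and `⋁_{u ∈ U} φ(u) ⊗ γ(u) = ⋁_{u ∈ M(U')} φ(u) ⊗ γ(u)`, where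
`U' = {u ∈ U : γ(u) = 1}` and `M(U')` is the set of `≤_em`-minimal elements of `U'`. -/
theorem stmt2 {L X : Type*} [IntegralLMonoid L] [Finite X] (φ : FreeMonoid X →* L)
    (U : Set (List X)) (γ : List X → L) (hγ : ∀ u, γ u = 1 ∨ γ u = ⊥) :
    ∃ s : L,
      IsLUB {l | ∃ u ∈ U, l = φ (FreeMonoid.ofList u) * γ u} s ∧
      IsLUB {l | ∃ u ∈ minimalWords {u ∈ U | γ u = 1},
        l = φ (FreeMonoid.ofList u) * γ u} s := by
  have setOf_eq_image (V : Set (List X)) : {l | ∃ u ∈ V, l = φ (FreeMonoid.ofList u) * γ u} =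
      (fun u => φ (FreeMonoid.ofList u) * γ u) '' V := by
    ext; simp only [Set.mem_ofPred_eq, Set.mem_image, eq_comm]
  rw [setOf_eq_image, setOf_eq_image]
  obtain ⟨s, hs⟩ := (minimalWords_finite {u ∈ U | γ u = 1}).exists_isLUB_image
    fun u => φ (FreeMonoid.ofList u) * γ u
  exact ⟨s, (isLUB_congr (IntegralLMonoid.upperBounds_image_minimalWords φ U hγ)).1 hs, hs⟩
end

section
/- Let L be an integral ℓ-monoid, X a finite alphabet, and f : X* → L a fuzzy language. Then the Kleene closure of f is well defined: for every word u ∈ X*, the set {fⁿ(u) : n ∈ ℕ ∪ {0}} has a least upper bound in L. -/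
attribute [local instance] Classical.propDecidable

noncomputable section

/-- Concatenation of fuzzy languages: `(fg)(u) = ⋁_{u = vw} f(v) ⊗ g(w)`
(a finite join over the factorizations of `u`). -/
def fconcat {L X : Type*} [IntegralLMonoid L] (f g : List X → L) : List X → L :=
  fun u => (Finset.range (u.length + 1)).sup fun i => f (u.take i) * g (u.drop i)

/-- Powers of a fuzzy language: `f⁰` is the characteristic function of the empty word,
and `f^{n+1} = fⁿ f`. -/
def fpow {L X : Type*} [IntegralLMonoid L] (f : List X → L) : ℕ → List X → L
  | 0 => fun u => if u = [] then 1 else ⊥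
  | n + 1 => fconcat (fpow f n) f

section Aux

variable {L X : Type*} [IntegralLMonoid L]

lemma aux_mul_le_left (x y : L) : x * y ≤ x := by
  have h : x * y ⊔ x * ⊤ = x * (y ⊔ ⊤) := (LMonoid.mul_sup x y ⊤).symm
  have hx : x * ⊤ = x := by rw [← IntegralLMonoid.one_eq_top, mul_one]
  calc x * y ≤ x * y ⊔ x * ⊤ := le_sup_left
    _ = x * (y ⊔ ⊤) := h
    _ = x := by rw [sup_top_eq, hx]

lemma aux_mul_le_mul_right {x x' : L} (h : x ≤ x') (y : L) : x * y ≤ x' * y := by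
  calc x * y ≤ x * y ⊔ x' * y := le_sup_left
    _ = (x ⊔ x') * y := (LMonoid.sup_mul x x' y).symm
    _ = x' * y := by rw [sup_eq_right.mpr h]

lemma fpow_step (f : List X → L) :
    ∀ m (u : List X), u.length = m → ∀ n, m ≤ n → fpow f (n + 1) u ≤ fpow f n u := by
  intro m
  induction m using Nat.strong_induction_on with
  | _ m ih =>
    intro u hu n hn
    show fconcat (fpow f n) f u ≤ fpow f n u
    apply Finset.sup_le
    intro i hi
    simp only [Finset.mem_range, Nat.lt_succ_iff] at hi
    rcases eq_or_lt_of_le hi with heq | hlt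
    · rw [heq, List.take_length, List.drop_length]
      exact aux_mul_le_left _ _
    · obtain ⟨k, rfl⟩ : ∃ k, n = k + 1 := ⟨n - 1, by omega⟩
      have htl : (u.take i).length = i := by rw [List.length_take]; omega
      have h1 : fpow f (k + 1) (u.take i) ≤ fpow f k (u.take i) :=
        ih i (by omega) (u.take i) htl k (by omega)
      have h2 : fpow f k (u.take i) * f (u.drop i) ≤ fpow f (k + 1) u := by
        show _ ≤ fconcat (fpow f k) f u
        exact Finset.le_sup (f := fun j => fpow f k (u.take j) * f (u.drop j))
          (Finset.mem_range.mpr (by omega))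
      exact le_trans (aux_mul_le_mul_right h1 _) h2

lemma fpow_chain (f : List X → L) (u : List X) :
    ∀ n, u.length ≤ n → fpow f n u ≤ fpow f u.length u := by
  intro n
  induction n with
  | zero => intro h; rw [Nat.le_zero.mp h]
  | succ k ihk =>
    intro h
    rcases eq_or_lt_of_le h with heq | hlt
    · rw [← heq]
    · have hk : u.length ≤ k := by omega
      exact le_trans (fpow_step f u.length u rfl k hk) (ihk hk)

end Aux

/-- Let `L` be an integral ℓ-monoid, `X` a finite alphabet and
`f : X* → L` a fuzzy language.  Then the Kleene closure of `f` is well defined: for every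
word `u ∈ X*`, the set `{fⁿ(u) : n ∈ ℕ ∪ {0}}` has a least upper bound in `L`. -/
theorem stmt4 {L X : Type*} [IntegralLMonoid L] [Finite X] (f : List X → L) :
    ∀ u : List X, ∃ s : L, IsLUB {l | ∃ n : ℕ, l = fpow f n u} s := by
  intro u
  refine ⟨(Finset.range (u.length + 1)).sup fun k => fpow f k u, ?_, ?_⟩
  · rintro l ⟨n, rfl⟩
    by_cases hn : n ≤ u.length
    · exact Finset.le_sup (f := fun k => fpow f k u) (Finset.mem_range.mpr (by omega))
    · exact le_trans (fpow_chain f u n (by omega))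
        (Finset.le_sup (f := fun k => fpow f k u) (Finset.mem_range.mpr (by omega)))
  · intro b hb
    apply Finset.sup_le
    intro k _
    exact hb ⟨k, rfl⟩

end
end

section
/- Let L be an integral ℓ-monoid, let α be a fuzzy regular expression over a finite alphabet X with associated alphabet Y, let A = (A, X∪Y, δ^A, a₀, τ^A) be an arbitrary nondeterministic finite automaton recognizing ‖α_R‖, and let A_α be the fuzzy automaton associated with A and α. Then for every nonempty word u ∈ X⁺ and all a, b ∈ A, the set {φ*_α(v)⊗δ^A(a,v,b) : v ∈ U_Y(u)} has a least upper bound in L, and δ^{A_α}(a, u, b) = ⋁_{v∈U_Y(u)} φ*_α(v)⊗δ^A(a,v,b), where δ^{A_α} on the left is the extension of the fuzzy transition relation of A_α to words. -/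
attribute [local instance] Classical.propDecidable

/-- Fuzzy regular expressions over an alphabet `X` with scalars in `L`. -/
inductive FRE (X L : Type*) where
  | zero : FRE X L
  | eps : FRE X L
  | char : X → FRE X L
  | smul : L → FRE X L → FRE X L
  | plus : FRE X L → FRE X L → FRE X L
  | comp : FRE X L → FRE X L → FRE X L
  | star : FRE X L → FRE X L

/-- The set of scalars of `L` occurring in a fuzzy regular expression. -/
def FRE.scalars {X L : Type*} : FRE X L → Set L
  | .zero => ∅
  | .eps => ∅
  | .char _ => ∅
  | .smul lam β => insert lam β.scalars
  | .plus β γ => β.scalars ∪ γ.scalars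
  | .comp β γ => β.scalars ∪ γ.scalars
  | .star β => β.scalars

noncomputable section

namespace Fz

variable {L : Type*} [IntegralLMonoid L]

/-- Composition of fuzzy relations: `(R ∘ S)(a,b) = ⋁_{c} R(a,c) ⊗ S(c,b)`. -/
def fcomp {A : Type*} [Fintype A] (R S : A → A → L) : A → A → L :=
  fun a b => Finset.univ.sup fun c => R a c * S c b

/-- Composition of a fuzzy relation with a fuzzy set: `(R ∘ f)(a) = ⋁_{b} R(a,b) ⊗ f(b)`. -/
def fcompf {A : Type*} [Fintype A] (R : A → A → L) (f : A → L) : A → L :=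
  fun a => Finset.univ.sup fun b => R a b * f b

/-- Composition of a fuzzy set with a fuzzy relation: `(f ∘ R)(a) = ⋁_{b} f(b) ⊗ R(b,a)`. -/
def fcompfR {A : Type*} [Fintype A] (f : A → L) (R : A → A → L) : A → L :=
  fun a => Finset.univ.sup fun b => f b * R b a

/-- Powers of a fuzzy relation: `R⁰` is the crisp equality and `R^{k+1} = R^k ∘ R`. -/
def rpow {A : Type*} [Fintype A] (R : A → A → L) : ℕ → A → A → L
  | 0 => fun a b => if a = b then 1 else ⊥
  | k + 1 => fcomp (rpow R k) R

private def dstarAux {A Z : Type*} [Fintype A] (δ : A → Z → A → L) : A → List Z → A → L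
  | a, [], b => if a = b then 1 else ⊥
  | a, z :: w, b => Finset.univ.sup fun c => dstarAux δ a w c * δ c z b

/-- The extension of a fuzzy transition relation to words:
`δ(a, ε, b) = 1` if `a = b` and `⊥` otherwise, and
`δ(a, ux, b) = ⋁_{c} δ(a, u, c) ⊗ δ(c, x, b)`. -/
def dstar {A Z : Type*} [Fintype A] (δ : A → Z → A → L) (a : A) (w : List Z) (b : A) : L :=
  dstarAux δ a w.reverse b

/-- Fuzzy language recognized by a fuzzy automaton with a single crisp initial state `a0`:
`L(A)(u) = ⋁_{b} δ(a0, u, b) ⊗ τ(b)`. -/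
def lang {A Z : Type*} [Fintype A] (δ : A → Z → A → L) (a0 : A) (τ : A → L)
    (w : List Z) : L :=
  Finset.univ.sup fun b => dstar δ a0 w b * τ b

/-- Concatenation of fuzzy languages: `(fg)(u) = ⋁_{u = vw} f(v) ⊗ g(w)`
(a finite join over the factorizations of `u`). -/
def fconcat {X : Type*} (f g : List X → L) : List X → L :=
  fun u => (Finset.range (u.length + 1)).sup fun i => f (u.take i) * g (u.drop i)

/-- Powers of a fuzzy language: `f⁰` is the characteristic function of the empty word,
and `f^{n+1} = fⁿ f`. -/
def fpow {X : Type*} (f : List X → L) : ℕ → List X → L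
  | 0 => fun u => if u = [] then 1 else ⊥
  | n + 1 => fconcat (fpow f n) f

/-- `IsNorm α f` asserts that `f` is the fuzzy language `‖α‖` represented by the fuzzy
regular expression `α` (for the star, `‖β*‖(u)` is the least upper bound of the powers,
which is required to exist). -/
inductive IsNorm {X : Type*} : FRE X L → (List X → L) → Prop
  | zero : IsNorm .zero fun _ => ⊥
  | eps : IsNorm .eps fun u => if u = [] then 1 else ⊥
  | char (x : X) : IsNorm (.char x) fun u => if u = [x] then 1 else ⊥
  | smul (lam : L) {β : FRE X L} {f : List X → L} :
      IsNorm β f → IsNorm (.smul lam β) fun u => lam * f u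
  | plus {β γ : FRE X L} {f g : List X → L} :
      IsNorm β f → IsNorm γ g → IsNorm (.plus β γ) fun u => f u ⊔ g u
  | comp {β γ : FRE X L} {f g : List X → L} :
      IsNorm β f → IsNorm γ g → IsNorm (.comp β γ) (fconcat f g)
  | star {β : FRE X L} {f g : List X → L} :
      IsNorm β f → (∀ u, IsLUB {l | ∃ n : ℕ, l = fpow f n u} (g u)) →
      IsNorm (.star β) g

/-- The ordinary regular expression `α_R` over `X ∪ Y` obtained from a fuzzy regular
expression `α` by replacing each scalar `λ` by the associated letter `λ' = sc λ ∈ Y`. -/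
def toReg {X Y : Type*} (sc : L → Y) : FRE X L → RegularExpression (X ⊕ Y)
  | .zero => 0
  | .eps => 1
  | .char x => RegularExpression.char (Sum.inl x)
  | .smul lam β => RegularExpression.char (Sum.inr (sc lam)) * toReg sc β
  | .plus β γ => toReg sc β + toReg sc γ
  | .comp β γ => toReg sc β * toReg sc γ
  | .star β => (toReg sc β).star

/-- `U_Y(u)`: the set of words over `X ∪ Y` from which deleting all letters of `Y`
yields `u` (the shuffle of `u` with `Y*`). -/
def UY {X : Type*} (Y : Type*) (u : List X) : Set (List (X ⊕ Y)) :=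
  {v | v.filterMap (fun z => z.getLeft?) = u}

/-- The homomorphism `φ*_α : (X ∪ Y)* → (L, ⊗, 1)` determined by mapping every letter of
`X` to `1` and every letter `λ' ∈ Y` to the corresponding scalar `λ = φY λ'`. -/
def phiStar {X Y : Type*} (φY : Y → L) (v : List (X ⊕ Y)) : L :=
  (v.map (Sum.elim (fun _ => (1 : L)) φY)).prod

/-- The language `‖α_R‖` of the regular expression `α_R`, viewed as a fuzzy language
with membership values in `{0, 1} ⊆ L`. -/
def langR {X Y : Type*} (sc : L → Y) (α : FRE X L) (v : List (X ⊕ Y)) : L :=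
  if v ∈ (toReg sc α).matches' then 1 else ⊥

/-- The reflexive fuzzy relation `R` on the state set of a nondeterministic automaton over
`X ∪ Y`: `R(a,a) = 1` and, for `a ≠ b`, `R(a,b) = ⋁_{λ' ∈ Y} λ ⊗ δ(a, λ', b)`. -/
def Rstep {X Y A : Type*} [Fintype A] [Fintype Y] (φY : Y → L)
    (δ : A → X ⊕ Y → A → L) : A → A → L :=
  fun a b => if a = b then 1 else Finset.univ.sup fun y : Y => φY y * δ a (Sum.inr y) b

/-- The fuzzy relation `R_A = Rⁿ`, `n = |A|`: the least transitive fuzzy relation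
containing `R`. -/
def RA {X Y A : Type*} [Fintype A] [Fintype Y] (φY : Y → L)
    (δ : A → X ⊕ Y → A → L) : A → A → L :=
  rpow (Rstep φY δ) (Fintype.card A)

/-- The set `{φ*_α(v) ⊗ δ^A(a,v,b) : v ∈ U_Y(x)}` whose least upper bound defines the
transition `δ^{A_α}(a, x, b)` of the fuzzy automaton associated with `A` and `α`. -/
def dset {X Y A : Type*} [Fintype A] (φY : Y → L) (δ : A → X ⊕ Y → A → L)
    (a : A) (x : X) (b : A) : Set L :=
  {l | ∃ v ∈ UY Y [x], l = phiStar φY v * dstar δ a v b}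

/-- The set `{⋁_{b} φ*_α(v) ⊗ δ^A(a,v,b) ⊗ τ(b) : v ∈ Y*}` whose least upper bound defines
the terminal degree `τ^{A_α}(a)` of the fuzzy automaton associated with `A` and `α`. -/
def tset {X Y A : Type*} [Fintype A] (φY : Y → L) (δ : A → X ⊕ Y → A → L)
    (τ : A → L) (a : A) : Set L :=
  {l | ∃ w : List Y, l = Finset.univ.sup fun b =>
    phiStar φY ((w.map Sum.inr : List (X ⊕ Y))) *
      dstar δ a (w.map Sum.inr) b * τ b}

end Fz

end

/-!
Only finite joins distribute over `⊗` in an ℓ-monoid, so the point is that every least upper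
bound involved is attained as a finite join. For a single letter `x`, a successful path of `A`
labelled by a word of `U_Y(x)` can be shortened, by cutting loops (pigeonhole) on either side
of `x`, to one of length at most `2|A| + 1`; since all scalars are `≤ 1` (integrality), deleting
letters can only increase `φ*_α`. Hence `δ^{A_α}(a, x, b)` is a finite join of path weights.
Splitting `v ∈ U_Y(xu)` as `v₁v₂` with `v₁ ∈ U_Y(x)`, and using that the crisp values
`δ^A(a, v₁, c)` commute with everything,
`φ*_α(v) ⊗ δ^A(a, v, b) = ⋁_c (φ*_α(v₁) ⊗ δ^A(a, v₁, c)) ⊗ (φ*_α(v₂) ⊗ δ^A(c, v₂, b))`,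
so induction on `u` shows that `δ^{A_α}(a, u, b)` bounds all these weights and is a finite join
of them.
-/

section FiniteLUB

variable {L ι : Type*} [SemilatticeSup L] [OrderBot L]

def IsFiniteLUB (f : ι → L) (U : Set ι) (e : L) : Prop :=
  e ∈ upperBounds {l | ∃ v ∈ U, l = f v} ∧ ∃ V : Finset ι, ↑V ⊆ U ∧ e ≤ V.sup f

lemma IsFiniteLUB.isLUB {f : ι → L} {U : Set ι} {e : L} (h : IsFiniteLUB f U e) :
    IsLUB {l | ∃ v ∈ U, l = f v} e := by
  obtain ⟨hub, V, hV, he⟩ := h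
  exact ⟨hub, fun M hM => he.trans (Finset.sup_le fun v hv => hM ⟨v, hV hv, rfl⟩)⟩

lemma IsLUB.isFiniteLUB {f : ι → L} {U : Set ι} {e : L} (h : IsLUB {l | ∃ v ∈ U, l = f v} e)
    (V : Finset ι) (hV : ↑V ⊆ U) (hcofinal : ∀ v ∈ U, ∃ v' ∈ V, f v ≤ f v') :
    IsFiniteLUB f U e := by
  refine ⟨h.1, V, hV, h.2 ?_⟩
  rintro _ ⟨v, hv, rfl⟩
  obtain ⟨v', hv', hle⟩ := hcofinal v hv
  exact hle.trans (Finset.le_sup hv')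

end FiniteLUB

namespace Fz

section LMonoid

variable {L : Type*} [LMonoid L]

instance : MulLeftMono L :=
  ⟨fun a b c h => sup_eq_right.mp (by rw [← LMonoid.mul_sup, sup_eq_right.mpr h])⟩

instance : MulRightMono L :=
  ⟨fun a b c h => sup_eq_right.mp (by
    show b * a ⊔ c * a = c * a
    rw [← LMonoid.sup_mul, sup_eq_right.mpr h])⟩

lemma finsetSup_mul {ι : Type*} (s : Finset ι) (f : ι → L) (x : L) :
    s.sup f * x = s.sup fun i => f i * x := by
  induction s using Finset.cons_induction with
  | empty => exact LMonoid.bot_mul x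
  | cons i s _ ih => rw [Finset.sup_cons, Finset.sup_cons, LMonoid.sup_mul, ih]

lemma mul_finsetSup {ι : Type*} (s : Finset ι) (f : ι → L) (x : L) :
    x * s.sup f = s.sup fun i => x * f i := by
  induction s using Finset.cons_induction with
  | empty => exact LMonoid.mul_bot x
  | cons i s _ ih => rw [Finset.sup_cons, Finset.sup_cons, LMonoid.mul_sup, ih]

end LMonoid

section IntegralLMonoid

variable {L : Type*} [IntegralLMonoid L]

lemma le_one (x : L) : x ≤ 1 :=
  IntegralLMonoid.one_eq_top (L := L) ▸ le_top

lemma eq_one_and_eq_one_of_mul_eq_one {x y : L} (h : x * y = 1) : x = 1 ∧ y = 1 :=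
  ⟨le_antisymm (le_one x) (h.symm.le.trans (mul_le_of_le_one_right' (le_one y))),
    le_antisymm (le_one y) (h.symm.le.trans (mul_le_of_le_one_left' (le_one x)))⟩

lemma phiStar_append {X Y : Type*} (φY : Y → L) (v w : List (X ⊕ Y)) :
    phiStar φY (v ++ w) = phiStar φY v * phiStar φY w := by
  simp [phiStar]

lemma phiStar_le_of_sublist {X Y : Type*} (φY : Y → L) {v w : List (X ⊕ Y)} (h : v.Sublist w) :
    phiStar φY w ≤ phiStar φY v :=
  List.Sublist.prod_le_prod' (M := Lᵒᵈ) (h.map _) fun a _ => le_one (L := L) a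

def Crisp (x : L) : Prop := x = 1 ∨ x = ⊥

lemma Crisp.mul {x y : L} (hx : Crisp x) (hy : Crisp y) : Crisp (x * y) := by
  rcases hx with rfl | rfl
  · rwa [one_mul]
  · exact Or.inr (LMonoid.bot_mul y)

lemma Crisp.sup {x y : L} (hx : Crisp x) (hy : Crisp y) : Crisp (x ⊔ y) := by
  rcases hx with rfl | rfl
  · exact Or.inl (sup_eq_left.mpr (le_one y))
  · rwa [bot_sup_eq]

lemma Crisp.finsetSup {ι : Type*} {s : Finset ι} {f : ι → L} (h : ∀ i ∈ s, Crisp (f i)) :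
    Crisp (s.sup f) :=
  Finset.sup_induction (Or.inr rfl) (fun _ hx _ hy => hx.sup hy) h

lemma Crisp.commute {x : L} (hx : Crisp x) (y : L) : Commute x y := by
  rcases hx with rfl | rfl
  · exact Commute.one_left y
  · exact (LMonoid.bot_mul y).trans (LMonoid.mul_bot y).symm

lemma exists_eq_one_of_finsetSup_eq_one {ι : Type*} {s : Finset ι} {f : ι → L}
    (hs : s.Nonempty) (hf : ∀ i ∈ s, Crisp (f i)) (h : s.sup f = 1) : ∃ i ∈ s, f i = 1 := by
  by_contra! hne
  have hbot : s.sup f = ⊥ :=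
    (Finset.sup_eq_bot_iff _ _).mpr fun i hi => (hf i hi).resolve_left (hne i hi)
  obtain ⟨i, hi⟩ := hs
  exact hne i hi (le_antisymm (le_one _) ((h.symm.trans hbot).le.trans bot_le))

section Dstar

variable {A Z : Type*} [Fintype A] (δ : A → Z → A → L)

lemma univ_sup_ite_eq (g : A → L) (b : A) :
    (Finset.univ.sup fun c => if c = b then g c else ⊥) = g b := by
  refine le_antisymm (Finset.sup_le fun c _ => ?_) ?_
  · split_ifs with h
    · exact h ▸ le_rfl
    · exact bot_le
  · simpa using Finset.le_sup (f := fun c => if c = b then g c else ⊥) (Finset.mem_univ b)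

lemma dstar_nil (a b : A) : dstar δ a [] b = if a = b then 1 else ⊥ := rfl

lemma dstar_append_singleton (a b : A) (w : List Z) (z : Z) :
    dstar δ a (w ++ [z]) b = Finset.univ.sup fun c => dstar δ a w c * δ c z b := by
  simp [dstar, dstarAux]

lemma dstar_singleton (a b : A) (z : Z) : dstar δ a [z] b = δ a z b := by
  simpa [dstar_nil, ite_mul, LMonoid.bot_mul, eq_comm (a := a), univ_sup_ite_eq] using
    dstar_append_singleton δ a b [] z

lemma dstar_append (a b : A) (v w : List Z) :
    dstar δ a (v ++ w) b = Finset.univ.sup fun c => dstar δ a v c * dstar δ c w b := by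
  induction w using List.reverseRecOn generalizing b with
  | nil => simp [dstar_nil, mul_ite, LMonoid.mul_bot, univ_sup_ite_eq]
  | append_singleton w z ih =>
    simp only [← List.append_assoc, dstar_append_singleton, ih, finsetSup_mul, mul_finsetSup,
      mul_assoc]
    exact Finset.sup_comm _ _ _

lemma dstar_cons (a b : A) (z : Z) (w : List Z) :
    dstar δ a (z :: w) b = Finset.univ.sup fun c => δ a z c * dstar δ c w b := by
  rw [← List.singleton_append, dstar_append]
  simp only [dstar_singleton]

variable {δ}

lemma crisp_dstar (hδ : ∀ a z b, Crisp (δ a z b)) (a : A) (w : List Z)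
    (b : A) : Crisp (dstar δ a w b) := by
  induction w using List.reverseRecOn generalizing b with
  | nil => by_cases h : a = b <;> simp [dstar_nil, h, Crisp]
  | append_singleton w z ih =>
    rw [dstar_append_singleton]
    exact Crisp.finsetSup fun c _ => (ih c).mul (hδ c z b)

lemma dstar_append_eq_one {a c b : A} {v w : List Z} (hv : dstar δ a v c = 1)
    (hw : dstar δ c w b = 1) : dstar δ a (v ++ w) b = 1 := by
  refine le_antisymm (le_one _) ?_
  rw [dstar_append]
  calc (1 : L) = dstar δ a v c * dstar δ c w b := by rw [hv, hw, one_mul]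
    _ ≤ _ := Finset.le_sup (f := fun c => dstar δ a v c * dstar δ c w b) (Finset.mem_univ c)

lemma exists_dstar_eq_one_of_dstar_append_eq_one (hδ : ∀ a z b, Crisp (δ a z b)) {a b : A}
    {v w : List Z} (h : dstar δ a (v ++ w) b = 1) : ∃ c, dstar δ a v c = 1 ∧ dstar δ c w b = 1 := by
  rw [dstar_append] at h
  obtain ⟨c, -, hc⟩ := exists_eq_one_of_finsetSup_eq_one ⟨a, Finset.mem_univ a⟩
    (fun c _ => (crisp_dstar hδ a v c).mul (crisp_dstar hδ c w b)) h
  exact ⟨c, eq_one_and_eq_one_of_mul_eq_one hc⟩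

-- Pigeonhole on the states reached after the first `k ≤ |A|` letters finds a loop to cut out.
lemma exists_shorter_sublist_dstar_eq_one (hδ : ∀ a z b, Crisp (δ a z b)) {a b : A}
    {w : List Z} (hlen : Fintype.card A < w.length) (h : dstar δ a w b = 1) :
    ∃ w', w'.Sublist w ∧ w'.length < w.length ∧ dstar δ a w' b = 1 := by
  have hsplit (k : Fin (Fintype.card A + 1)) :
      ∃ c, dstar δ a (w.take k) c = 1 ∧ dstar δ c (w.drop k) b = 1 :=
    exists_dstar_eq_one_of_dstar_append_eq_one hδ (by rwa [List.take_append_drop])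
  choose state hpre hsuf using hsplit
  obtain ⟨i, j, hne, hij⟩ := Fintype.exists_ne_map_eq_of_card_lt state (by simp)
  wlog hlt : i < j generalizing i j
  · exact this j i hne.symm hij.symm (hne.symm.lt_of_le (not_lt.mp hlt))
  refine ⟨w.take i ++ w.drop j, ?_, ?_, dstar_append_eq_one (hpre i) (hij ▸ hsuf j)⟩
  · simpa only [List.take_append_drop] using
      (List.drop_sublist_drop_left w hlt.le).append_left (w.take i)
  · have : (j : ℕ) ≤ Fintype.card A := Nat.lt_succ_iff.mp j.isLt
    simp only [List.length_append, List.length_take, List.length_drop]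
    omega

lemma exists_sublist_length_le_card_dstar_eq_one (hδ : ∀ a z b, Crisp (δ a z b)) {a b : A}
    (w : List Z) (h : dstar δ a w b = 1) :
    ∃ w', w'.Sublist w ∧ w'.length ≤ Fintype.card A ∧ dstar δ a w' b = 1 := by
  by_cases hlen : w.length ≤ Fintype.card A
  · exact ⟨w, List.Sublist.refl w, hlen, h⟩
  obtain ⟨w', hsub, hshort, h'⟩ := exists_shorter_sublist_dstar_eq_one hδ (not_le.mp hlen) h
  obtain ⟨w'', hsub', hlen', h''⟩ := exists_sublist_length_le_card_dstar_eq_one hδ w' h'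
  exact ⟨w'', hsub'.trans hsub, hlen', h''⟩
termination_by w.length

lemma exists_sublists_dstar_eq_one (hδ : ∀ a z b, Crisp (δ a z b)) {a b : A}
    {p q : List Z} {z : Z} (h : dstar δ a (p ++ z :: q) b = 1) :
    ∃ p' q', p'.Sublist p ∧ q'.Sublist q ∧ p'.length ≤ Fintype.card A ∧
      q'.length ≤ Fintype.card A ∧ dstar δ a (p' ++ z :: q') b = 1 := by
  obtain ⟨c, hp, hzq⟩ := exists_dstar_eq_one_of_dstar_append_eq_one hδ h
  obtain ⟨d, hz, hq⟩ := exists_dstar_eq_one_of_dstar_append_eq_one hδ (v := [z]) hzq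
  obtain ⟨p', hpp, hp'len, hp'⟩ := exists_sublist_length_le_card_dstar_eq_one hδ p hp
  obtain ⟨q', hqq, hq'len, hq'⟩ := exists_sublist_length_le_card_dstar_eq_one hδ q hq
  exact ⟨p', q', hpp, hqq, hp'len, hq'len,
    dstar_append_eq_one hp' (dstar_append_eq_one hz hq')⟩

end Dstar

section Paths

variable {X Y : Type*}

lemma mem_UY_append_iff {u₁ u₂ : List X} {v : List (X ⊕ Y)} :
    v ∈ UY Y (u₁ ++ u₂) ↔ ∃ v₁ v₂, v = v₁ ++ v₂ ∧ v₁ ∈ UY Y u₁ ∧ v₂ ∈ UY Y u₂ :=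
  List.filterMap_eq_append_iff

lemma mem_UY_singleton_iff {x : X} {v : List (X ⊕ Y)} :
    v ∈ UY Y [x] ↔ ∃ p q, v = p ++ Sum.inl x :: q ∧ p ∈ UY Y [] ∧ q ∈ UY Y [] := by
  simp [UY, List.filterMap_eq_cons_iff]

lemma mem_UY_nil_of_sublist {p q : List (X ⊕ Y)} (h : p.Sublist q) (hq : q ∈ UY Y []) :
    p ∈ UY Y [] :=
  List.sublist_nil.mp (hq ▸ h.filterMap _)

variable {A : Type*} [Fintype A] (φY : Y → L) (δ : A → X ⊕ Y → A → L)

noncomputable def pathWeight (a b : A) (v : List (X ⊕ Y)) : L :=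
  phiStar φY v * dstar δ a v b

variable {δ}

lemma pathWeight_append (hδ : ∀ a z b, Crisp (δ a z b)) (a b : A) (v w : List (X ⊕ Y)) :
    pathWeight φY δ a b (v ++ w) =
      Finset.univ.sup fun c => pathWeight φY δ a c v * pathWeight φY δ c b w := by
  simp only [pathWeight, phiStar_append, dstar_append, mul_finsetSup]
  refine Finset.sup_congr rfl fun c _ => ?_
  rw [mul_assoc, mul_assoc, ((crisp_dstar hδ a v c).commute _).left_comm]

lemma mul_pathWeight_le_pathWeight_append (hδ : ∀ a z b, Crisp (δ a z b)) (a c b : A)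
    (v w : List (X ⊕ Y)) :
    pathWeight φY δ a c v * pathWeight φY δ c b w ≤ pathWeight φY δ a b (v ++ w) :=
  pathWeight_append φY hδ a b v w ▸
    Finset.le_sup (f := fun c => pathWeight φY δ a c v * pathWeight φY δ c b w)
      (Finset.mem_univ c)

lemma exists_finset_cofinal_pathWeight_singleton [Finite X] [Finite Y]
    (hδ : ∀ a z b, Crisp (δ a z b)) (a b : A) (x : X) :
    ∃ V : Finset (List (X ⊕ Y)), ↑V ⊆ UY Y [x] ∧
      ∀ v ∈ UY Y [x], ∃ v' ∈ V, pathWeight φY δ a b v ≤ pathWeight φY δ a b v' := by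
  have hfin : {v | v ∈ UY Y [x] ∧ v.length ≤ 2 * Fintype.card A + 1}.Finite :=
    (List.finite_length_le _ _).subset fun v hv => hv.2
  refine ⟨hfin.toFinset, fun v hv => (hfin.mem_toFinset.mp hv).1, fun v hv => ?_⟩
  rcases crisp_dstar hδ a v b with h | h
  · obtain ⟨p, q, rfl, hp, hq⟩ := mem_UY_singleton_iff.mp hv
    obtain ⟨p', q', hpp, hqq, hp'len, hq'len, h'⟩ := exists_sublists_dstar_eq_one hδ h
    have hmem : p' ++ Sum.inl x :: q' ∈ UY Y [x] := mem_UY_singleton_iff.mpr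
      ⟨p', q', rfl, mem_UY_nil_of_sublist hpp hp, mem_UY_nil_of_sublist hqq hq⟩
    refine ⟨_, hfin.mem_toFinset.mpr ⟨hmem, ?_⟩, ?_⟩
    · simp only [List.length_append, List.length_cons]
      omega
    · rw [pathWeight, pathWeight, h, h']
      exact mul_le_mul' (phiStar_le_of_sublist φY (hpp.append (hqq.cons_cons _))) le_rfl
  · refine ⟨[Sum.inl x], hfin.mem_toFinset.mpr ⟨mem_UY_singleton_iff.mpr
      ⟨[], [], rfl, rfl, rfl⟩, by simp⟩, ?_⟩
    rw [pathWeight, h, LMonoid.mul_bot]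
    exact bot_le

lemma isFiniteLUB_append (hδ : ∀ a z b, Crisp (δ a z b)) {u₁ u₂ : List X} {a b : A}
    {e₁ e₂ : A → L} (h₁ : ∀ c, IsFiniteLUB (pathWeight φY δ a c) (UY Y u₁) (e₁ c))
    (h₂ : ∀ c, IsFiniteLUB (pathWeight φY δ c b) (UY Y u₂) (e₂ c)) :
    IsFiniteLUB (pathWeight φY δ a b) (UY Y (u₁ ++ u₂))
      (Finset.univ.sup fun c => e₁ c * e₂ c) := by
  refine ⟨?_, ?_⟩
  · rintro _ ⟨v, hv, rfl⟩
    obtain ⟨v₁, v₂, rfl, hv₁, hv₂⟩ := mem_UY_append_iff.mp hv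
    rw [pathWeight_append φY hδ]
    exact Finset.sup_mono_fun fun c _ =>
      mul_le_mul' ((h₁ c).1 ⟨v₁, hv₁, rfl⟩) ((h₂ c).1 ⟨v₂, hv₂, rfl⟩)
  choose V₁ hV₁ he₁ using fun c => (h₁ c).2
  choose V₂ hV₂ he₂ using fun c => (h₂ c).2
  refine ⟨Finset.univ.biUnion fun c => Finset.image₂ (· ++ ·) (V₁ c) (V₂ c), ?_,
    Finset.sup_le fun c _ => ?_⟩
  · intro v hv
    simp only [Finset.coe_biUnion, Finset.coe_univ, Set.mem_univ, Set.iUnion_true,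
      Finset.coe_image₂, Set.mem_iUnion, Set.mem_image2] at hv
    obtain ⟨c, v₁, hv₁, v₂, hv₂, rfl⟩ := hv
    exact mem_UY_append_iff.mpr ⟨v₁, v₂, rfl, hV₁ c hv₁, hV₂ c hv₂⟩
  refine (mul_le_mul' (he₁ c) (he₂ c)).trans ?_
  rw [finsetSup_mul]
  refine Finset.sup_le fun v₁ hv₁ => ?_
  rw [mul_finsetSup]
  refine Finset.sup_le fun v₂ hv₂ => ?_
  exact (mul_pathWeight_le_pathWeight_append φY hδ a c b v₁ v₂).trans (Finset.le_sup
    (Finset.mem_biUnion.mpr ⟨c, Finset.mem_univ c, Finset.mem_image₂_of_mem hv₁ hv₂⟩))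

end Paths

end IntegralLMonoid

end Fz

open Fz in
theorem stmt19_general {L X Y A : Type*} [IntegralLMonoid L] [Fintype X] [Fintype Y] [Fintype A]
    (φY : Y → L)
    (δ : A → X ⊕ Y → A → L)
    (hδ : ∀ a z b, δ a z b = 1 ∨ δ a z b = ⊥)
    (δα : A → X → A → L)
    (hδα : ∀ (a : A) (x : X) (b : A), IsLUB (dset φY δ a x b) (δα a x b)) :
    ∀ u : List X, u ≠ [] → ∀ a b : A,
      IsLUB {l | ∃ v ∈ UY Y u, l = phiStar φY v * dstar δ a v b} (dstar δα a u b) := by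
  have hsingle (a : A) (x : X) (b : A) :
      IsFiniteLUB (pathWeight φY δ a b) (UY Y [x]) (δα a x b) := by
    obtain ⟨V, hV, hcofinal⟩ := exists_finset_cofinal_pathWeight_singleton φY hδ a b x
    exact (hδα a x b).isFiniteLUB V hV hcofinal
  suffices h : ∀ x u a b,
      IsFiniteLUB (pathWeight φY δ a b) (UY Y (x :: u)) (dstar δα a (x :: u) b) by
    rintro (_ | ⟨x, u⟩) hu a b
    · exact absurd rfl hu
    · exact (h x u a b).isLUB
  intro x u
  induction u generalizing x with
  | nil =>
    intro a b
    rw [dstar_singleton]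
    exact hsingle a x b
  | cons y u ih =>
    intro a b
    rw [dstar_cons]
    exact isFiniteLUB_append φY hδ (fun c => hsingle a x c) (fun c => ih y c b)

open Fz in
/-- Let `L` be an integral ℓ-monoid, `α` a fuzzy regular expression over
a finite alphabet `X` with associated alphabet `Y`, `A = (A, X∪Y, δ, a₀, τ)` an arbitrary
nondeterministic finite automaton recognizing `‖α_R‖`, and `A_α` the fuzzy automaton
associated with `A` and `α`.  Then for every nonempty word `u ∈ X⁺` and all states
`a, b ∈ A`, the set `{φ*_α(v) ⊗ δ(a,v,b) : v ∈ U_Y(u)}` has a least upper bound in `L`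
and `δ^{A_α}(a, u, b) = ⋁_{v ∈ U_Y(u)} φ*_α(v) ⊗ δ(a,v,b)`, where `δ^{A_α}` on the left
is the extension of the fuzzy transition relation of `A_α` to words. -/
theorem stmt19 {L X Y A : Type*} [IntegralLMonoid L] [Fintype X] [Fintype Y] [Fintype A]
    (α : FRE X L) (sc : L → Y) (φY : Y → L)
    (hsc : Set.BijOn sc α.scalars (Set.univ : Set Y))
    (hφY : ∀ l ∈ α.scalars, φY (sc l) = l)
    (δ : A → X ⊕ Y → A → L) (a0 : A) (τ : A → L)
    (hδ : ∀ a z b, δ a z b = 1 ∨ δ a z b = ⊥)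
    (hτ : ∀ a, τ a = 1 ∨ τ a = ⊥)
    (hrec : ∀ v : List (X ⊕ Y), lang δ a0 τ v = langR sc α v)
    (δα : A → X → A → L) (τα : A → L)
    (hδα : ∀ (a : A) (x : X) (b : A), IsLUB (dset φY δ a x b) (δα a x b))
    (hτα : ∀ a : A, IsLUB (tset φY δ τ a) (τα a)) :
    ∀ u : List X, u ≠ [] → ∀ a b : A,
      IsLUB {l | ∃ v ∈ UY Y u, l = phiStar φY v * dstar δ a v b} (dstar δα a u b) :=
  stmt19_general φY δ hδ δα hδα
end
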